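/- Let G be a finite simple graph and let x be a half-integral optimal solution to LPVC(G). Then LP(G[V^x_{1/2}]) = LP(G) − |V^x_1|, where G[V^x_{1/2}] is the induced subgraph of G on V^x_{1/2}. -/

import Mathlib

open scoped Classical

/-- A fractional vertex cover of `G`. -/
def IsFVC {V : Type} (G : SimpleGraph V) (x : V → ℝ) : Prop :=
  (∀ v, 0 ≤ x v ∧ x v ≤ 1) ∧ ∀ ⦃u v⦄, G.Adj u v → 1 ≤ x u + x v

/-- The weight of a fractional vertex cover. -/
noncomputable def fvcWeight {V : Type} [Fintype V] (x : V → ℝ) : ℝ := ∑ v, x v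

/-- `LP(G)`: the minimum weight of a fractional vertex cover of `G`. -/
noncomputable def LPopt {V : Type} [Fintype V] (G : SimpleGraph V) : ℝ :=
  sInf {w : ℝ | ∃ x : V → ℝ, IsFVC G x ∧ w = fvcWeight x}

/-- A matching of `G`: a set of pairwise vertex-disjoint edges of `G`. -/
def IsMatchingSet {V : Type} (G : SimpleGraph V) (M : Finset (Sym2 V)) : Prop :=
  (∀ e ∈ M, e ∈ G.edgeSet) ∧ ∀ e ∈ M, ∀ f ∈ M, e ≠ f → ∀ v : V, v ∈ e → v ∉ f

/-- `MM(G)`: the maximum size of a matching of `G`. -/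
noncomputable def MMnum {V : Type} (G : SimpleGraph V) : ℕ :=
  sSup {n : ℕ | ∃ M : Finset (Sym2 V), IsMatchingSet G M ∧ M.card = n}

/-- `OPT(G)`: the minimum size of a vertex cover of `G`. -/
noncomputable def VCnum {V : Type} (G : SimpleGraph V) : ℕ :=
  sInf {n : ℕ | ∃ S : Finset V, (∀ ⦃u v⦄, G.Adj u v → u ∈ S ∨ v ∈ S) ∧ S.card = n}

/-- `N(X)`: the set of vertices outside `X` having a neighbour in `X`. -/
def nbhd {V : Type} (G : SimpleGraph V) (X : Set V) : Set V :=
  {v | v ∉ X ∧ ∃ u ∈ X, G.Adj u v}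

/-- `X` is an independent set in `G`. -/
def IndepSet {V : Type} (G : SimpleGraph V) (X : Set V) : Prop :=
  ∀ u ∈ X, ∀ v ∈ X, ¬ G.Adj u v

/-- `surplus(G) ≥ s`: every nonempty independent set `X` satisfies `|N(X)| ≥ |X| + s`. -/
def SurplusGE {V : Type} (G : SimpleGraph V) (s : ℕ) : Prop :=
  ∀ X : Set V, X.Nonempty → IndepSet G X → X.ncard + s ≤ (nbhd G X).ncard

/-- The matching `M` saturates the vertex `v`. -/
def Saturates {V : Type} (M : Finset (Sym2 V)) (v : V) : Prop := ∃ e ∈ M, v ∈ e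

/-- `O(G)`: vertices left unsaturated by some maximum matching of `G`. -/
def OSet {V : Type} (G : SimpleGraph V) : Set V :=
  {v | ∃ M : Finset (Sym2 V), IsMatchingSet G M ∧ M.card = MMnum G ∧ ¬ Saturates M v}

/-- `I(G)`: vertices outside `O(G)` having a neighbour in `O(G)`. -/
def ISet {V : Type} (G : SimpleGraph V) : Set V := nbhd G (OSet G)

/-- `P(G)`: the remaining vertices. -/
def GEPSet {V : Type} (G : SimpleGraph V) : Set V := (OSet G ∪ ISet G)ᶜ

/-
Restricting `x` to `V^x_{1/2}` gives a fractional cover of the induced graph. Conversely, a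
fractional cover `y` of `G[V^x_{1/2}]` glued with `x` outside `V^x_{1/2}` covers `G`, since every
edge leaving `V^x_{1/2}` ends at a vertex where `x = 1`. By optimality of `x` both bounds hold
with the weight of `x` outside `V^x_{1/2}`, which is `|V^x_1|`.
-/

open Finset

lemma isFVC_one {V : Type} (G : SimpleGraph V) : IsFVC G 1 :=
  ⟨fun _ => by norm_num, fun _ _ _ => by norm_num⟩

section LinearProgram

variable {V : Type} [Fintype V]

lemma bddBelow_fvcWeights (G : SimpleGraph V) :
    BddBelow {w : ℝ | ∃ x : V → ℝ, IsFVC G x ∧ w = fvcWeight x} :=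
  ⟨0, by rintro _ ⟨y, hy, rfl⟩; exact sum_nonneg fun v _ => (hy.1 v).1⟩

lemma LPopt_le_fvcWeight (G : SimpleGraph V) {y : V → ℝ} (hy : IsFVC G y) :
    LPopt G ≤ fvcWeight y :=
  csInf_le (bddBelow_fvcWeights G) ⟨y, hy, rfl⟩

lemma le_LPopt (G : SimpleGraph V) {c : ℝ} (h : ∀ y : V → ℝ, IsFVC G y → c ≤ fvcWeight y) :
    c ≤ LPopt G :=
  le_csInf ⟨_, 1, isFVC_one G, rfl⟩ (by rintro _ ⟨y, hy, rfl⟩; exact h y hy)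

end LinearProgram

lemma IsFVC.induce {V : Type} {G : SimpleGraph V} {x : V → ℝ} (hx : IsFVC G x) (S : Set V) :
    IsFVC (G.induce S) (fun v : S => x v) :=
  ⟨fun v => hx.1 v, fun _ _ huv => hx.2 huv⟩

lemma IsFVC.dite_induce {V : Type} {G : SimpleGraph V} {x : V → ℝ} {S : Set V} {y : S → ℝ}
    (hx : IsFVC G x) (hy : IsFVC (G.induce S) y)
    (hbd : ∀ ⦃u v⦄, G.Adj u v → u ∈ S → v ∉ S → x v = 1) :
    IsFVC G (fun v => if h : v ∈ S then y ⟨v, h⟩ else x v) := by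
  refine ⟨fun v => ?_, fun u v huv => ?_⟩
  · by_cases h : v ∈ S
    · simpa only [dif_pos h] using hy.1 ⟨v, h⟩
    · simpa only [dif_neg h] using hx.1 v
  · by_cases hu : u ∈ S <;> by_cases hv : v ∈ S <;> simp only [hu, hv, dite_true, dite_false]
    · exact hy.2 (show (G.induce S).Adj ⟨u, hu⟩ ⟨v, hv⟩ from huv)
    · linarith [hbd huv hu hv, (hy.1 ⟨u, hu⟩).1]
    · linarith [hbd huv.symm hv hu, (hy.1 ⟨v, hv⟩).1]
    · exact hx.2 huv

lemma sum_dite_mem {V : Type} [Fintype V] (S : Set V) (y : S → ℝ) (x : V → ℝ) :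
    ∑ v, (if h : v ∈ S then y ⟨v, h⟩ else x v) = ∑ v : S, y v + ∑ v with v ∉ S, x v := by
  rw [← sum_filter_add_sum_filter_not univ (· ∈ S)]
  congr 1
  · rw [sum_subtype (p := (· ∈ S)) _ (by simp)]
    exact sum_congr rfl fun v _ => dif_pos v.2
  · exact sum_congr rfl fun v hv => dif_neg (mem_filter.mp hv).2

theorem LPopt_induce_eq_sub {V : Type} [Fintype V] {G : SimpleGraph V} {x : V → ℝ}
    (hx : IsFVC G x) (hopt : fvcWeight x = LPopt G) (S : Set V)
    (hbd : ∀ ⦃u v⦄, G.Adj u v → u ∈ S → v ∉ S → x v = 1) :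
    LPopt (G.induce S) = LPopt G - ∑ v with v ∉ S, x v := by
  have hsplit : fvcWeight x = fvcWeight (fun v : S => x v) + ∑ v with v ∉ S, x v := by
    simpa [fvcWeight] using sum_dite_mem S (fun v => x v) x
  apply le_antisymm
  · linarith [LPopt_le_fvcWeight _ (hx.induce S)]
  · refine le_LPopt _ fun y hy => ?_
    have hglue := LPopt_le_fvcWeight G (hx.dite_induce hy hbd)
    rw [fvcWeight, sum_dite_mem] at hglue
    exact sub_le_iff_le_add.mpr hglue

lemma sum_ne_half_eq_ncard_one {V : Type} [Fintype V] {x : V → ℝ}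
    (hhalf : ∀ v, x v = 0 ∨ x v = 1 / 2 ∨ x v = 1) :
    ∑ v with v ∉ {v | x v = 1 / 2}, x v = (({v | x v = 1} : Set V).ncard : ℝ) := by
  have hpt : ∀ v, (if v ∉ {v | x v = 1 / 2} then x v else 0) = if x v = 1 then 1 else 0 := by
    intro v
    rcases hhalf v with h | h | h <;> norm_num [h]
  rw [sum_filter, sum_congr rfl fun v _ => hpt v, sum_boole, Set.ncard_eq_toFinset_card',
    Set.toFinset_ofPred]

lemma IsFVC.eq_one_of_adj_of_ne_half {V : Type} {G : SimpleGraph V} {x : V → ℝ} (hx : IsFVC G x)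
    (hhalf : ∀ v, x v = 0 ∨ x v = 1 / 2 ∨ x v = 1) {u v : V} (huv : G.Adj u v)
    (hu : x u = 1 / 2) (hv : x v ≠ 1 / 2) : x v = 1 := by
  have hcover := hx.2 huv
  rcases hhalf v with h | h | h
  · rw [hu, h] at hcover
    norm_num at hcover
  · exact absurd h hv
  · exact h

/-- For a half-integral optimal LP solution `x`,
`LP(G[V^x_{1/2}]) = LP(G) − |V^x_1|`. -/
theorem lp_half_eq_lp_sub_ones {V : Type} [Fintype V] (G : SimpleGraph V)
    (x : V → ℝ) (hx : IsFVC G x)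
    (hhalf : ∀ v, x v = 0 ∨ x v = 1 / 2 ∨ x v = 1)
    (hopt : fvcWeight x = LPopt G) :
    LPopt (G.induce {v | x v = 1 / 2}) =
      LPopt G - (({v | x v = 1} : Set V).ncard : ℝ) := by
  rw [LPopt_induce_eq_sub hx hopt {v | x v = 1 / 2}
      fun _ _ huv hu hv => hx.eq_one_of_adj_of_ne_half hhalf huv hu hv,
    sum_ne_half_eq_ncard_one hhalf]
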